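/- arXiv:2207.00832 — 2 statements merged into one kernel-verified Lean document; each statement's English description precedes it below -/
import Mathlib

section
/- Let n ≥ 2 be even, let B ∈ {B^D, B^I}, and let x, y be distinct words in U_n with Hamming distance d_H(x,y) = 2. Then |B(x) ∩ B(y)| = 1 if and only if x and y are Type-B-confusable. -/
namespace BRC

/-- Hamming distance between two binary words (of the same length). -/
def hammingDist (x y : List Bool) : ℕ :=
  (List.zip x y).countP (fun p => p.1 != p.2)

/-- `balanced n` is the set `U_n` of binary words of length `n` with exactly `n/2` ones. -/
def balanced (n : ℕ) : Set (List Bool) :=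
  {x | x.length = n ∧ x.count true = n / 2}

/-- `B^S(x)`: words obtained from `x` by at most one substitution. -/
def BS (x : List Bool) : Set (List Bool) :=
  {y | y.length = x.length ∧ hammingDist x y ≤ 1}

/-- `B^D(x)`: words obtained from `x` by deleting one symbol. -/
def BD (x : List Bool) : Set (List Bool) :=
  {y | ∃ (u v : List Bool) (b : Bool), x = u ++ b :: v ∧ y = u ++ v}

/-- `B^I(x)`: words obtained from `x` by inserting one symbol. -/
def BI (x : List Bool) : Set (List Bool) :=
  {y | ∃ (u v : List Bool) (b : Bool), x = u ++ v ∧ y = u ++ b :: v}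

def BDI (x : List Bool) : Set (List Bool) := BD x ∪ BI x
def BSD (x : List Bool) : Set (List Bool) := BS x ∪ BD x
def BSI (x : List Bool) : Set (List Bool) := BS x ∪ BI x
def Bedit (x : List Bool) : Set (List Bool) := BS x ∪ BD x ∪ BI x

/-- `C` is a balanced `(n,N;B)`-reconstruction code: `C ⊆ U_n` and `ν(C;B) < N`. -/
def reconCode (n N : ℕ) (B : List Bool → Set (List Bool)) (C : Set (List Bool)) : Prop :=
  C ⊆ balanced n ∧ ∀ x ∈ C, ∀ y ∈ C, x ≠ y → (B x ∩ B y).ncard < N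

/-- `ρ_b(n,N;B)`: optimal redundancy of a balanced `(n,N;B)`-reconstruction code. -/
noncomputable def rho (n N : ℕ) (B : List Bool → Set (List Bool)) : ℝ :=
  sInf {r : ℝ | ∃ C : Set (List Bool),
    reconCode n N B C ∧ r = (n : ℝ) - Real.logb 2 (C.ncard : ℝ)}

/-- `(10)^m`. -/
def pat10 (m : ℕ) : List Bool := (List.replicate m [true, false]).flatten
/-- `(01)^m`. -/
def pat01 (m : ℕ) : List Bool := (List.replicate m [false, true]).flatten

/-- Type-A-confusable with parameter `m`: `{c, c'} = {(10)^m, (01)^m}`. -/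
def TypeAWith (m : ℕ) (x y : List Bool) : Prop :=
  ∃ u v : List Bool,
    (x = u ++ pat10 m ++ v ∧ y = u ++ pat01 m ++ v) ∨
    (x = u ++ pat01 m ++ v ∧ y = u ++ pat10 m ++ v)

/-- Type-A-confusable (with some `m ≥ 1`). -/
def TypeA (x y : List Bool) : Prop := ∃ m, 1 ≤ m ∧ TypeAWith m x y

/-- Type-B-confusable with parameter `m`:
`{c, c'} = {0 1^m, 1^m 0}` or `{c, c'} = {1 0^m, 0^m 1}`. -/
def TypeBWith (m : ℕ) (x y : List Bool) : Prop :=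
  ∃ u v : List Bool,
    ((x = u ++ (false :: List.replicate m true) ++ v ∧
        y = u ++ (List.replicate m true ++ [false]) ++ v) ∨
     (x = u ++ (List.replicate m true ++ [false]) ++ v ∧
        y = u ++ (false :: List.replicate m true) ++ v)) ∨
    ((x = u ++ (true :: List.replicate m false) ++ v ∧
        y = u ++ (List.replicate m false ++ [true]) ++ v) ∨
     (x = u ++ (List.replicate m false ++ [true]) ++ v ∧
        y = u ++ (true :: List.replicate m false) ++ v))

/-- Type-B-confusable (with some `m ≥ 2`). -/
def TypeB (x y : List Bool) : Prop := ∃ m, 2 ≤ m ∧ TypeBWith m x y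

/-- Number of runs of a binary word. -/
def numRuns (x : List Bool) : ℕ := (x.destutter (· ≠ ·)).length

/-- `V_{n-1}`: binary words of length `n-1` with Hamming weight `n/2` or `n/2 - 1`. -/
def Vset (n : ℕ) : Set (List Bool) :=
  {x | x.length = n - 1 ∧ (x.count true = n / 2 ∨ x.count true = n / 2 - 1)}

/-- VT weighted sum `Σ_{i=1}^n i·x_i` (positions indexed from 1). -/
def vtSum (x : List Bool) : ℕ :=
  (x.zipIdx.map (fun p => if p.1 then p.2 + 1 else 0)).sum

/-- The balanced Varshamov–Tenengolts code `BVT_a(n)`. -/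
def BVT (n a : ℕ) : Set (List Bool) :=
  {x | x ∈ balanced n ∧ vtSum x ≡ a [MOD n + 1]}

/-- `R_2^b(n,1,m)`: balanced words of length `n` all of whose runs have length at most `m`. -/
def R1 (n m : ℕ) : Set (List Bool) :=
  {x | x ∈ balanced n ∧ ∀ b : Bool, ¬ (List.replicate (m + 1) b <:+: x)}

/-!
Two words of equal length and weight at Hamming distance 2 are `x = p a m (!a) s` and
`y = p (!a) m a s`. A common deletion (insertion) keeps the common prefix `p`, and the words
`a m (!a) s` and `(!a) m a s` have a common deletion (insertion) only for a symbol `c` with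
`m = c^k`, and then exactly one: `c m s` (resp. `(!c) c m (!c) s`). Hence `|B x ∩ B y|` is
2, 1 or 0 according as `m` is empty, a nonempty run, or neither; and since the swap
decomposition of `(x, y)` is unique, `x, y` are Type-B-confusable exactly when `m` is a
nonempty run.
-/

lemma mem_BD_cons {c : Bool} {t z : List Bool} :
    z ∈ BD (c :: t) ↔ z = t ∨ ∃ w ∈ BD t, z = c :: w := by
  constructor
  · rintro ⟨_ | ⟨c', u⟩, v, b, hx, rfl⟩
    · exact .inl (List.cons.inj hx).2.symm
    · obtain ⟨rfl, rfl⟩ := List.cons.inj hx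
      exact .inr ⟨u ++ v, ⟨u, v, b, rfl, rfl⟩, rfl⟩
  · rintro (rfl | ⟨w, ⟨u, v, b, rfl, rfl⟩, rfl⟩)
    · exact ⟨[], z, c, rfl, rfl⟩
    · exact ⟨c :: u, v, b, rfl, rfl⟩

lemma mem_BI_cons {c : Bool} {t z : List Bool} :
    z ∈ BI (c :: t) ↔ (∃ b, z = b :: c :: t) ∨ ∃ w ∈ BI t, z = c :: w := by
  constructor
  · rintro ⟨_ | ⟨c', u⟩, v, b, hx, rfl⟩
    · exact .inl ⟨b, by simp [hx]⟩
    · obtain ⟨rfl, rfl⟩ := List.cons.inj hx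
      exact .inr ⟨u ++ b :: v, ⟨u, v, b, rfl, rfl⟩, rfl⟩
  · rintro (⟨b, rfl⟩ | ⟨w, ⟨u, v, b, rfl, rfl⟩, rfl⟩)
    · exact ⟨[], c :: t, b, rfl, rfl⟩
    · exact ⟨c :: u, v, b, rfl, rfl⟩

lemma BD_cons_inter_BD_cons {X Y : List Bool} (c : Bool) (hXY : X ≠ Y) :
    BD (c :: X) ∩ BD (c :: Y) = (c :: ·) '' (BD X ∩ BD Y) := by
  ext z
  simp only [Set.mem_inter_iff, Set.mem_image, mem_BD_cons]
  constructor
  · rintro ⟨rfl | ⟨w, hwX, rfl⟩, rfl | ⟨w', hwY, he⟩⟩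
    · exact absurd rfl hXY
    · exact ⟨w', ⟨he ▸ mem_BD_cons.2 (.inl rfl), hwY⟩, he.symm⟩
    · exact ⟨w, ⟨hwX, mem_BD_cons.2 (.inl rfl)⟩, rfl⟩
    · obtain rfl := (List.cons.inj he).2
      exact ⟨w, ⟨hwX, hwY⟩, rfl⟩
  · rintro ⟨w, ⟨hwX, hwY⟩, rfl⟩
    exact ⟨.inr ⟨w, hwX, rfl⟩, .inr ⟨w, hwY, rfl⟩⟩

lemma BI_cons_inter_BI_cons {X Y : List Bool} (c : Bool) (hXY : X ≠ Y) :
    BI (c :: X) ∩ BI (c :: Y) = (c :: ·) '' (BI X ∩ BI Y) := by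
  ext z
  simp only [Set.mem_inter_iff, Set.mem_image, mem_BI_cons]
  constructor
  · rintro ⟨⟨b, rfl⟩ | ⟨w, hwX, rfl⟩, ⟨b', he⟩ | ⟨w', hwY, he⟩⟩
    · exact absurd (List.cons.inj (List.cons.inj he).2).2 hXY
    · obtain ⟨rfl, rfl⟩ := List.cons.inj he
      exact ⟨_, ⟨⟨[], X, _, rfl, rfl⟩, hwY⟩, rfl⟩
    · obtain ⟨rfl, rfl⟩ := List.cons.inj he
      exact ⟨_, ⟨hwX, ⟨[], Y, _, rfl, rfl⟩⟩, rfl⟩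
    · obtain rfl := (List.cons.inj he).2
      exact ⟨w, ⟨hwX, hwY⟩, rfl⟩
  · rintro ⟨w, ⟨hwX, hwY⟩, rfl⟩
    exact ⟨.inr ⟨w, hwX, rfl⟩, .inr ⟨w, hwY, rfl⟩⟩

lemma BD_append_inter_BD_append {X Y : List Bool} (p : List Bool) (hXY : X ≠ Y) :
    BD (p ++ X) ∩ BD (p ++ Y) = (p ++ ·) '' (BD X ∩ BD Y) := by
  induction p with
  | nil => simp
  | cons c p ih =>
    rw [List.cons_append, List.cons_append, BD_cons_inter_BD_cons c (by simpa using hXY), ih,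
      Set.image_image]
    rfl

lemma BI_append_inter_BI_append {X Y : List Bool} (p : List Bool) (hXY : X ≠ Y) :
    BI (p ++ X) ∩ BI (p ++ Y) = (p ++ ·) '' (BI X ∩ BI Y) := by
  induction p with
  | nil => simp
  | cons c p ih =>
    rw [List.cons_append, List.cons_append, BI_cons_inter_BI_cons c (by simpa using hXY), ih,
      Set.image_image]
    rfl

lemma append_cons_eq_cons_append {m : List Bool} {c : Bool} (hm : ∀ b ∈ m, b = c)
    (s : List Bool) : m ++ c :: s = c :: (m ++ s) := by
  induction m with
  | nil => rfl
  | cons d m ih =>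
    obtain ⟨rfl, hm⟩ := List.forall_mem_cons.1 hm
    simp only [List.cons_append, ih hm]

lemma forall_eq_of_append_mem_BD {a b : Bool} (hab : a ≠ b) {m s : List Bool}
    (h : m ++ b :: s ∈ BD (b :: (m ++ a :: s))) : ∀ x ∈ m, x = b := by
  induction m with
  | nil => simp
  | cons c m ih =>
    rcases mem_BD_cons.1 h with he | ⟨w, hw, he⟩
    · simp [hab.symm] at he
    · obtain ⟨rfl, rfl⟩ := List.cons.inj he
      exact List.forall_mem_cons.2 ⟨rfl, ih hw⟩

lemma forall_eq_of_cons_mem_BI {a b : Bool} (hab : a ≠ b) {m s : List Bool}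
    (h : a :: (m ++ b :: s) ∈ BI (m ++ a :: s)) : ∀ x ∈ m, x = a := by
  induction m with
  | nil => simp
  | cons c m ih =>
    rcases mem_BI_cons.1 h with ⟨_, he⟩ | ⟨w, hw, he⟩
    · simp [hab.symm] at he
    · obtain ⟨rfl, rfl⟩ := List.cons.inj he
      exact List.forall_mem_cons.2 ⟨rfl, ih hw⟩

lemma cons_append_mem_BD {m : List Bool} {c : Bool} (hm : ∀ b ∈ m, b = c) (a : Bool)
    (s : List Bool) : c :: (m ++ s) ∈ BD (a :: (m ++ (!a) :: s)) := by
  rcases Bool.eq_or_eq_not c a with rfl | rfl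
  · exact ⟨c :: m, s, !c, rfl, rfl⟩
  · exact mem_BD_cons.2 (.inl (append_cons_eq_cons_append hm s).symm)

lemma cons_cons_append_mem_BI {m : List Bool} {c : Bool} (hm : ∀ b ∈ m, b = c) (a : Bool)
    (s : List Bool) : (!c) :: c :: (m ++ (!c) :: s) ∈ BI (a :: (m ++ (!a) :: s)) := by
  rcases Bool.eq_or_eq_not c a with rfl | rfl
  · exact ⟨[], _, !c, rfl, rfl⟩
  · rw [Bool.not_not, ← append_cons_eq_cons_append hm]
    exact mem_BI_cons.2 (.inr ⟨_, ⟨m ++ [!a], s, a, by simp, by simp⟩, rfl⟩)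

lemma BD_inter_BD_swap (a : Bool) (m s : List Bool) :
    BD (a :: (m ++ (!a) :: s)) ∩ BD ((!a) :: (m ++ a :: s)) =
      (fun c => c :: (m ++ s)) '' {c | ∀ b ∈ m, b = c} := by
  ext z
  simp only [Set.mem_inter_iff, Set.mem_image, Set.mem_ofPred_eq]
  constructor
  · rintro ⟨h1, h2⟩
    rcases mem_BD_cons.1 h1 with rfl | ⟨w, -, rfl⟩
    · have hm := forall_eq_of_append_mem_BD (Bool.self_ne_not a) h2
      exact ⟨!a, hm, (append_cons_eq_cons_append hm s).symm⟩
    · rcases mem_BD_cons.1 h2 with he | ⟨w', -, he⟩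
      · rw [he] at h1
        have hm := forall_eq_of_append_mem_BD (Bool.not_ne_self a) h1
        exact ⟨a, hm, by rw [he, append_cons_eq_cons_append hm]⟩
      · simp at he
  · rintro ⟨c, hm, rfl⟩
    exact ⟨cons_append_mem_BD hm a s, by simpa using cons_append_mem_BD hm (!a) s⟩

lemma BI_inter_BI_swap (a : Bool) (m s : List Bool) :
    BI (a :: (m ++ (!a) :: s)) ∩ BI ((!a) :: (m ++ a :: s)) =
      (fun c => (!c) :: c :: (m ++ (!c) :: s)) '' {c | ∀ b ∈ m, b = c} := by
  ext z
  simp only [Set.mem_inter_iff, Set.mem_image, Set.mem_ofPred_eq]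
  constructor
  · rintro ⟨h1, h2⟩
    rcases mem_BI_cons.1 h1 with ⟨b, rfl⟩ | ⟨w, hw, rfl⟩
    · rcases mem_BI_cons.1 h2 with ⟨_, he⟩ | ⟨w', hw', he⟩
      · simp at he
      · obtain ⟨rfl, rfl⟩ := List.cons.inj he
        exact ⟨a, forall_eq_of_cons_mem_BI (Bool.self_ne_not a) hw', rfl⟩
    · rcases mem_BI_cons.1 h2 with ⟨_, he⟩ | ⟨w', -, he⟩
      · obtain ⟨-, rfl⟩ := List.cons.inj he
        exact ⟨!a, forall_eq_of_cons_mem_BI (Bool.not_ne_self a) hw, by simp⟩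
      · simp at he
  · rintro ⟨c, hm, rfl⟩
    exact ⟨cons_cons_append_mem_BI hm a s, by simpa using cons_cons_append_mem_BI hm (!a) s⟩

lemma ncard_setOf_forall_mem_eq_eq_one {m : List Bool} :
    {c : Bool | ∀ b ∈ m, b = c}.ncard = 1 ↔ m ≠ [] ∧ ∃ c, ∀ b ∈ m, b = c := by
  rw [Set.ncard_eq_one]
  constructor
  · rintro ⟨c, hc⟩
    have hmem (c' : Bool) : c' ∈ {c : Bool | ∀ b ∈ m, b = c} ↔ c' = c := by rw [hc]; rfl
    refine ⟨?_, c, (hmem c).2 rfl⟩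
    rintro rfl
    simpa using (hmem (!c)).1 (by simp)
  · rintro ⟨hne, c, hc⟩
    obtain ⟨b, hb⟩ := List.exists_mem_of_ne_nil m hne
    refine ⟨c, Set.eq_singleton_iff_unique_mem.2 ⟨hc, fun c' hc' => ?_⟩⟩
    rw [← hc' b hb, hc b hb]

lemma ncard_BD_inter_BD_swap (p : List Bool) (a : Bool) (m s : List Bool) :
    (BD (p ++ a :: (m ++ (!a) :: s)) ∩ BD (p ++ (!a) :: (m ++ a :: s))).ncard =
      {c : Bool | ∀ b ∈ m, b = c}.ncard := by
  rw [BD_append_inter_BD_append p (by simp), BD_inter_BD_swap, Set.image_image,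
    Set.ncard_image_of_injective]
  intro c c' h
  simpa using h

lemma ncard_BI_inter_BI_swap (p : List Bool) (a : Bool) (m s : List Bool) :
    (BI (p ++ a :: (m ++ (!a) :: s)) ∩ BI (p ++ (!a) :: (m ++ a :: s))).ncard =
      {c : Bool | ∀ b ∈ m, b = c}.ncard := by
  rw [BI_append_inter_BI_append p (by simp), BI_inter_BI_swap, Set.image_image,
    Set.ncard_image_of_injective]
  intro c c' h
  simpa using h

lemma hammingDist_cons_cons (a b : Bool) (x y : List Bool) :
    hammingDist (a :: x) (b :: y) = hammingDist x y + if a = b then 0 else 1 := by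
  simp only [hammingDist, List.zip_cons_cons, List.countP_cons]
  cases a <;> cases b <;> rfl

lemma hammingDist_self (x : List Bool) : hammingDist x x = 0 := by
  induction x with
  | nil => rfl
  | cons a x ih => simp [hammingDist_cons_cons, ih]

lemma eq_of_hammingDist_eq_zero {x y : List Bool} (hl : x.length = y.length)
    (h : hammingDist x y = 0) : x = y := by
  induction x generalizing y with
  | nil => exact (List.length_eq_zero_iff.1 hl.symm).symm
  | cons a x ih =>
    obtain _ | ⟨b, y⟩ := y
    · simp at hl
    · obtain ⟨h0, rfl⟩ : hammingDist x y = 0 ∧ a = b := by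
        simpa [hammingDist_cons_cons] using h
      rw [ih (by simpa using hl) h0]

lemma hammingDist_append_cons_not (p : List Bool) (a : Bool) (x y : List Bool) :
    hammingDist (p ++ a :: x) (p ++ (!a) :: y) = hammingDist x y + 1 := by
  induction p with
  | nil => simp [hammingDist_cons_cons]
  | cons c p ih => simp [hammingDist_cons_cons, ih]

lemma exists_append_cons_not_of_ne {x y : List Bool} (hl : x.length = y.length) (hne : x ≠ y) :
    ∃ p a x' y', x = p ++ a :: x' ∧ y = p ++ (!a) :: y' := by
  induction x generalizing y with
  | nil => exact absurd (List.length_eq_zero_iff.1 hl.symm).symm hne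
  | cons a x ih =>
    obtain _ | ⟨b, y⟩ := y
    · simp at hl
    · rcases Bool.eq_or_eq_not b a with rfl | rfl
      · obtain ⟨p, a', x', y', rfl, rfl⟩ := ih (by simpa using hl) (by simpa using hne)
        exact ⟨b :: p, a', x', y', rfl, rfl⟩
      · exact ⟨[], a, x, y, rfl, rfl⟩

lemma exists_swap_of_hammingDist_eq_two {x y : List Bool} (hl : x.length = y.length)
    (hw : x.count true = y.count true) (hd : hammingDist x y = 2) :
    ∃ p a m s, x = p ++ a :: (m ++ (!a) :: s) ∧ y = p ++ (!a) :: (m ++ a :: s) := by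
  obtain ⟨p, a, x', y', rfl, rfl⟩ :=
    exists_append_cons_not_of_ne hl (by rintro rfl; simp [hammingDist_self] at hd)
  rw [hammingDist_append_cons_not] at hd
  simp only [List.length_append, List.length_cons] at hl
  obtain ⟨m, b, s, s', rfl, rfl⟩ :=
    exists_append_cons_not_of_ne (x := x') (y := y') (by omega)
      (by rintro rfl; simp [hammingDist_self] at hd)
  rw [hammingDist_append_cons_not] at hd
  simp only [List.length_append, List.length_cons] at hl
  obtain rfl := eq_of_hammingDist_eq_zero (by omega) (by omega : hammingDist s s' = 0)
  refine ⟨p, a, m, s, ?_⟩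
  cases a <;> cases b <;> simp at hw ⊢ <;> omega

lemma append_cons_not_inj {p p' r r' w w' : List Bool} {b b' : Bool}
    (h1 : p ++ b :: r = p' ++ b' :: r') (h2 : p ++ (!b) :: w = p' ++ (!b') :: w') :
    p = p' ∧ b = b' ∧ r = r' ∧ w = w' := by
  induction p generalizing p' with
  | nil =>
    cases p' with
    | nil => simp_all
    | cons c q =>
      simp only [List.nil_append, List.cons_append, List.cons.injEq] at h1 h2
      simp [h1.1] at h2
  | cons c q ih =>
    cases p' with
    | nil =>
      simp only [List.nil_append, List.cons_append, List.cons.injEq] at h1 h2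
      simp [← h1.1] at h2
    | cons c' q' =>
      simp only [List.cons_append, List.cons.injEq] at h1 h2
      obtain ⟨rfl, h1⟩ := h1
      obtain ⟨rfl, hb, hr, hw⟩ := ih h1 h2.2
      exact ⟨rfl, hb, hr, hw⟩

lemma eq_of_swap_eq_swap {p p' m m' s s' : List Bool} {a a' : Bool}
    (hx : p ++ a :: (m ++ (!a) :: s) = p' ++ a' :: (m' ++ (!a') :: s'))
    (hy : p ++ (!a) :: (m ++ a :: s) = p' ++ (!a') :: (m' ++ a' :: s')) : m = m' := by
  obtain ⟨-, rfl, hx, hy⟩ := append_cons_not_inj hx hy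
  exact (append_cons_not_inj hx (by simpa using hy)).1

lemma typeBWith_succ_iff {k : ℕ} {x y : List Bool} :
    TypeBWith (k + 1) x y ↔ ∃ u a c v,
      x = u ++ a :: (List.replicate k c ++ (!a) :: v) ∧
      y = u ++ (!a) :: (List.replicate k c ++ a :: v) := by
  have shift (c : Bool) (v : List Bool) :
      List.replicate k c ++ c :: v = c :: (List.replicate k c ++ v) :=
    append_cons_eq_cons_append (fun _ => List.eq_of_mem_replicate) v
  constructor
  · rintro ⟨u, v, (⟨rfl, rfl⟩ | ⟨rfl, rfl⟩) | (⟨rfl, rfl⟩ | ⟨rfl, rfl⟩)⟩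
    · exact ⟨u, false, true, v, by simp [List.replicate_succ, shift],
        by simp [List.replicate_succ]⟩
    · exact ⟨u, true, true, v, by simp [List.replicate_succ],
        by simp [List.replicate_succ, shift]⟩
    · exact ⟨u, true, false, v, by simp [List.replicate_succ, shift],
        by simp [List.replicate_succ]⟩
    · exact ⟨u, false, false, v, by simp [List.replicate_succ],
        by simp [List.replicate_succ, shift]⟩
  · rintro ⟨u, a, c, v, rfl, rfl⟩
    refine ⟨u, v, ?_⟩
    cases a <;> cases c <;> simp [List.replicate_succ, shift]

lemma typeB_swap_iff (p : List Bool) (a : Bool) (m s : List Bool) :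
    TypeB (p ++ a :: (m ++ (!a) :: s)) (p ++ (!a) :: (m ++ a :: s)) ↔
      m ≠ [] ∧ ∃ c, ∀ b ∈ m, b = c := by
  constructor
  · rintro ⟨_ | k, hk, h⟩
    · omega
    obtain ⟨u, a', c, v, hx, hy⟩ := typeBWith_succ_iff.1 h
    obtain rfl := eq_of_swap_eq_swap hx hy
    exact ⟨by simp; omega, c, fun _ => List.eq_of_mem_replicate⟩
  · rintro ⟨hne, c, hc⟩
    obtain ⟨k, hk⟩ := Nat.exists_eq_add_one_of_ne_zero (List.length_pos_iff.2 hne).ne'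
    rw [List.eq_replicate_length.2 hc, hk]
    exact ⟨k + 2, by omega, typeBWith_succ_iff.2 ⟨p, a, c, s, rfl, rfl⟩⟩

theorem stmt11_general (n : ℕ)
    (B : List Bool → Set (List Bool)) (hB : B = BD ∨ B = BI)
    (x y : List Bool) (hx : x ∈ balanced n) (hy : y ∈ balanced n)
    (hd : hammingDist x y = 2) :
    (B x ∩ B y).ncard = 1 ↔ TypeB x y := by
  obtain ⟨p, a, m, s, rfl, rfl⟩ :=
    exists_swap_of_hammingDist_eq_two (hx.1.trans hy.1.symm) (hx.2.trans hy.2.symm) hd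
  rw [typeB_swap_iff, ← ncard_setOf_forall_mem_eq_eq_one]
  rcases hB with rfl | rfl
  · rw [ncard_BD_inter_BD_swap]
  · rw [ncard_BI_inter_BI_swap]

/-- Proposition: for `B ∈ {B^D, B^I}` and distinct balanced words at Hamming distance 2,
`|B(x) ∩ B(y)| = 1` iff `x, y` are Type-B-confusable. -/
theorem stmt11 (n : ℕ) (hn : Even n) (h2 : 2 ≤ n)
    (B : List Bool → Set (List Bool)) (hB : B = BD ∨ B = BI)
    (x y : List Bool) (hx : x ∈ balanced n) (hy : y ∈ balanced n) (hxy : x ≠ y)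
    (hd : hammingDist x y = 2) :
    (B x ∩ B y).ncard = 1 ↔ TypeB x y :=
  stmt11_general n B hB x y hx hy hd

end BRC
end

section
/- Let n ≥ 2 be even and let x, y be distinct words in U_n. Then |B^DI(x) ∩ B^DI(y)| ∈ {0, 2, 4}, and |B^DI(x) ∩ B^DI(y)| = 4 if and only if x and y are Type-A-confusable. Consequently, for every integer N ≥ 5 and every even n ≥ 2, ρ_b(n,N;B^DI) = n − log2 C(n, n/2). -/
/-!
Two words `x ≠ y` of equal length share a deletion or an insertion only if one arises from the
other by deleting a symbol and inserting one further left, `x = u w b v`, `y = u c w v`; the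
common deletion `u w v` and the common insertion `u c w b v` are then determined by the ordered
pair `(x, y)`, and for words of equal weight the two orders never produce the same word. So
`|B^DI(x) ∩ B^DI(y)|` is twice the number of orders in which such a move exists. Moves in both
orders leave, after stripping common first and last symbols, two complementary alternating
words, of even length because the weights agree: this is Type-A confusability. In particular
all of `U_n` is a code with `ν < 5`, which gives the redundancy `n - log₂ C(n, n/2)`.
-/

namespace BRC

def IsSlide (x y d i : List Bool) : Prop :=
  ∃ (u w v : List Bool) (b c : Bool),
    x = u ++ w ++ b :: v ∧ y = u ++ c :: w ++ v ∧ d = u ++ w ++ v ∧ i = u ++ c :: w ++ b :: v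

def HasSlide (x y : List Bool) : Prop := ∃ d i, IsSlide x y d i

section Balls

variable {x z : List Bool}

theorem length_of_mem_BD (h : z ∈ BD x) : z.length + 1 = x.length := by
  obtain ⟨u, v, b, rfl, rfl⟩ := h
  simp only [List.length_append, List.length_cons]
  omega

theorem length_of_mem_BI (h : z ∈ BI x) : z.length = x.length + 1 := by
  obtain ⟨u, v, b, rfl, rfl⟩ := h
  simp only [List.length_append, List.length_cons]
  omega

theorem BD_finite (x : List Bool) : (BD x).Finite :=
  (List.finite_length_eq Bool (x.length - 1)).subset fun _ hz => by
    have := length_of_mem_BD hz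
    show _ = _
    omega

theorem BI_finite (x : List Bool) : (BI x).Finite :=
  (List.finite_length_eq Bool (x.length + 1)).subset fun _ hz => length_of_mem_BI hz

end Balls

namespace IsSlide

variable {x y d i : List Bool}

theorem mem_BD (h : IsSlide x y d i) : d ∈ BD x ∩ BD y := by
  obtain ⟨u, w, v, b, c, rfl, rfl, rfl, -⟩ := h
  exact ⟨⟨u ++ w, v, b, rfl, rfl⟩, ⟨u, w ++ v, c, by simp, by simp⟩⟩

theorem mem_BI (h : IsSlide x y d i) : i ∈ BI x ∩ BI y := by
  obtain ⟨u, w, v, b, c, rfl, rfl, -, rfl⟩ := h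
  exact ⟨⟨u, w ++ b :: v, c, by simp, by simp⟩, ⟨u ++ c :: w, v, b, by simp, rfl⟩⟩

theorem length_eq (h : IsSlide x y d i) : x.length = d.length + 1 ∧ y.length = d.length + 1 := by
  obtain ⟨u, w, v, b, c, rfl, rfl, rfl, -⟩ := h
  constructor <;> simp <;> omega

theorem exists_cons (h : IsSlide x y d i) : (∃ a x', x = a :: x') ∧ ∃ c y', y = c :: y' := by
  obtain ⟨hx, hy⟩ := h.length_eq
  exact ⟨List.exists_cons_of_length_eq_add_one hx, List.exists_cons_of_length_eq_add_one hy⟩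

theorem cons (a : Bool) (h : IsSlide x y d i) : IsSlide (a :: x) (a :: y) (a :: d) (a :: i) := by
  obtain ⟨u, w, v, b, c, rfl, rfl, rfl, rfl⟩ := h
  exact ⟨a :: u, w, v, b, c, rfl, rfl, rfl, rfl⟩

theorem reverse (h : IsSlide x y d i) :
    IsSlide y.reverse x.reverse d.reverse i.reverse := by
  obtain ⟨u, w, v, b, c, rfl, rfl, rfl, rfl⟩ := h
  exact ⟨v.reverse, w.reverse, u.reverse, c, b, by simp, by simp, by simp, by simp⟩

theorem of_head_ne {a c : Bool} (h : IsSlide (a :: x) (c :: y) d i) (hac : a ≠ c) :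
    d = y ∧ i = c :: a :: x := by
  obtain ⟨u, w, v, b, c', hx, hy, rfl, rfl⟩ := h
  cases u with
  | cons e u =>
    simp only [List.cons_append, List.cons.injEq] at hx hy
    exact absurd (hx.1.trans hy.1.symm) hac
  | nil =>
    simp only [List.nil_append, List.cons_append, List.cons.injEq] at hx hy
    obtain ⟨rfl, rfl⟩ := hy
    simp [hx]

theorem of_cons {a : Bool} (h : IsSlide (a :: x) (a :: y) d i) (hxy : x ≠ y) :
    ∃ d' i', IsSlide x y d' i' ∧ d = a :: d' ∧ i = a :: i' := by
  obtain ⟨u, w, v, b, c, hx, hy, rfl, rfl⟩ := h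
  cases u with
  | cons e u =>
    simp only [List.cons_append, List.cons.injEq] at hx hy
    obtain ⟨rfl, rfl⟩ := hx
    exact ⟨_, _, ⟨u, w, v, b, c, rfl, hy.2, rfl, rfl⟩, rfl, rfl⟩
  | nil =>
    simp only [List.nil_append, List.cons_append, List.cons.injEq] at hx hy
    obtain ⟨rfl, rfl⟩ := hy
    cases w with
    | nil =>
      simp only [List.nil_append, List.cons.injEq] at hx
      exact absurd hx.2 hxy
    | cons f w =>
      simp only [List.cons_append, List.cons.injEq] at hx
      obtain ⟨rfl, rfl⟩ := hx
      exact ⟨_, _, ⟨[], w, v, b, _, rfl, rfl, rfl, rfl⟩, rfl, rfl⟩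

theorem of_concat {e : Bool} (h : IsSlide (x ++ [e]) (y ++ [e]) d i) (hxy : x ≠ y) :
    HasSlide x y := by
  have hrev : IsSlide (e :: y.reverse) (e :: x.reverse) d.reverse i.reverse := by
    simpa using h.reverse
  obtain ⟨d', i', h', -⟩ := hrev.of_cons (by simpa using hxy.symm)
  exact ⟨_, _, by simpa using h'.reverse⟩

theorem eq_of_getLast_ne {e e' : Bool} (h : IsSlide (x ++ [e]) (y ++ [e']) d i) (hne : e ≠ e') :
    d = x := by
  have hrev : IsSlide (e' :: y.reverse) (e :: x.reverse) d.reverse i.reverse := by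
    simpa using h.reverse
  simpa using (hrev.of_head_ne hne.symm).1

theorem unique (hxy : x ≠ y) {d' i' : List Bool} (h : IsSlide x y d i)
    (h' : IsSlide x y d' i') : d = d' ∧ i = i' := by
  induction x generalizing y d i d' i' with
  | nil => exact absurd h.length_eq.1 (by simp)
  | cons a x ih =>
    obtain ⟨-, c, y, rfl⟩ := h.exists_cons
    by_cases hac : a = c
    · subst hac
      have hxy' : x ≠ y := fun he => hxy (congrArg _ he)
      obtain ⟨d₁, i₁, h₁, rfl, rfl⟩ := h.of_cons hxy'
      obtain ⟨d₂, i₂, h₂, rfl, rfl⟩ := h'.of_cons hxy'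
      obtain ⟨rfl, rfl⟩ := ih hxy' h₁ h₂
      exact ⟨rfl, rfl⟩
    · obtain ⟨rfl, rfl⟩ := h.of_head_ne hac
      obtain ⟨rfl, rfl⟩ := h'.of_head_ne hac
      exact ⟨rfl, rfl⟩

-- Where the heads differ, the deletions are the two tails, and equal tails would make the
-- weights differ.
theorem ne_of_swap (hxy : x ≠ y) (hc : x.count true = y.count true) {d' i' : List Bool}
    (h : IsSlide x y d i) (h' : IsSlide y x d' i') : d ≠ d' ∧ i ≠ i' := by
  induction x generalizing y d i d' i' with
  | nil => exact absurd h.length_eq.1 (by simp)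
  | cons a x ih =>
    obtain ⟨-, c, y, rfl⟩ := h.exists_cons
    by_cases hac : a = c
    · subst hac
      have hxy' : x ≠ y := fun he => hxy (congrArg _ he)
      obtain ⟨d₁, i₁, h₁, rfl, rfl⟩ := h.of_cons hxy'
      obtain ⟨d₂, i₂, h₂, rfl, rfl⟩ := h'.of_cons hxy'.symm
      simpa using ih hxy' (by simpa [List.count_cons] using hc) h₁ h₂
    · obtain ⟨rfl, rfl⟩ := h.of_head_ne hac
      obtain ⟨rfl, rfl⟩ := h'.of_head_ne (Ne.symm hac)
      refine ⟨?_, by simp [Ne.symm hac]⟩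
      rintro rfl
      cases a <;> cases c <;> simp_all

end IsSlide

section Intersections

open Classical

variable {x y z : List Bool}

theorem exists_isSlide_of_mem_BD_inter (h : z ∈ BD x ∩ BD y) :
    (∃ i, IsSlide x y z i) ∨ ∃ i, IsSlide y x z i := by
  obtain ⟨⟨u₁, v₁, b, rfl, rfl⟩, ⟨u₂, v₂, c, rfl, hz⟩⟩ := h
  rcases List.append_eq_append_iff.1 hz with ⟨w, rfl, rfl⟩ | ⟨w, rfl, rfl⟩
  · exact .inr ⟨_, u₁, w, v₂, c, b, by simp, by simp, by simp, rfl⟩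
  · exact .inl ⟨_, u₂, w, v₁, b, c, by simp, by simp, by simp, rfl⟩

theorem exists_isSlide_of_mem_BI_inter (hxy : x ≠ y) (h : z ∈ BI x ∩ BI y) :
    (∃ d, IsSlide x y d z) ∨ ∃ d, IsSlide y x d z := by
  obtain ⟨⟨u₁, v₁, b, rfl, rfl⟩, ⟨u₂, v₂, c, rfl, hz⟩⟩ := h
  rcases List.append_eq_append_iff.1 hz with ⟨w, rfl, hw⟩ | ⟨w, rfl, hw⟩
  · rcases List.cons_eq_append_iff.1 hw with ⟨rfl, hv⟩ | ⟨w', rfl, rfl⟩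
    · simp_all
    · exact .inl ⟨_, u₁, w', v₂, c, b, by simp, by simp, rfl, by simp⟩
  · rcases List.cons_eq_append_iff.1 hw with ⟨rfl, hv⟩ | ⟨w', rfl, rfl⟩
    · simp_all
    · exact .inr ⟨_, u₂, w', v₁, b, c, by simp, by simp, rfl, by simp⟩

theorem BD_inter_BD_eq (x y : List Bool) :
    BD x ∩ BD y = {d | ∃ i, IsSlide x y d i} ∪ {d | ∃ i, IsSlide y x d i} := by
  ext z
  refine ⟨exists_isSlide_of_mem_BD_inter, ?_⟩
  rintro (⟨i, h⟩ | ⟨i, h⟩)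
  · exact h.mem_BD
  · exact h.mem_BD.symm

theorem BI_inter_BI_eq (hxy : x ≠ y) :
    BI x ∩ BI y = {i | ∃ d, IsSlide x y d i} ∪ {i | ∃ d, IsSlide y x d i} := by
  ext z
  refine ⟨exists_isSlide_of_mem_BI_inter hxy, ?_⟩
  rintro (⟨d, h⟩ | ⟨d, h⟩)
  · exact h.mem_BI
  · exact h.mem_BI.symm

theorem ncard_setOf_isSlide_del (hxy : x ≠ y) :
    {d | ∃ i, IsSlide x y d i}.ncard = if HasSlide x y then 1 else 0 := by
  split_ifs with h
  · obtain ⟨d, i, h⟩ := h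
    exact Set.ncard_eq_one.2 ⟨d, Set.eq_singleton_iff_unique_mem.2
      ⟨⟨i, h⟩, fun _ ⟨_, h'⟩ => (h'.unique hxy h).1⟩⟩
  · have hempty : {d | ∃ i, IsSlide x y d i} = ∅ :=
      Set.eq_empty_iff_forall_notMem.2 fun d ⟨i, h'⟩ => h ⟨d, i, h'⟩
    rw [hempty, Set.ncard_empty]

theorem ncard_setOf_isSlide_ins (hxy : x ≠ y) :
    {i | ∃ d, IsSlide x y d i}.ncard = if HasSlide x y then 1 else 0 := by
  split_ifs with h
  · obtain ⟨d, i, h⟩ := h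
    exact Set.ncard_eq_one.2 ⟨i, Set.eq_singleton_iff_unique_mem.2
      ⟨⟨d, h⟩, fun _ ⟨_, h'⟩ => (h'.unique hxy h).2⟩⟩
  · have hempty : {i | ∃ d, IsSlide x y d i} = ∅ :=
      Set.eq_empty_iff_forall_notMem.2 fun i ⟨d, h'⟩ => h ⟨d, i, h'⟩
    rw [hempty, Set.ncard_empty]

theorem ncard_BD_inter_BD (hxy : x ≠ y) (hc : x.count true = y.count true) :
    (BD x ∩ BD y).ncard = (if HasSlide x y then 1 else 0) + if HasSlide y x then 1 else 0 := by
  have hdisj : Disjoint {d | ∃ i, IsSlide x y d i} {d | ∃ i, IsSlide y x d i} :=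
    Set.disjoint_left.2 fun _ ⟨_, h⟩ ⟨_, h'⟩ => (h.ne_of_swap hxy hc h').1 rfl
  rw [BD_inter_BD_eq, Set.ncard_union_eq hdisj
    ((BD_finite x).subset fun _ ⟨_, h⟩ => h.mem_BD.1)
    ((BD_finite y).subset fun _ ⟨_, h⟩ => h.mem_BD.1),
    ncard_setOf_isSlide_del hxy, ncard_setOf_isSlide_del hxy.symm]

theorem ncard_BI_inter_BI (hxy : x ≠ y) (hc : x.count true = y.count true) :
    (BI x ∩ BI y).ncard = (if HasSlide x y then 1 else 0) + if HasSlide y x then 1 else 0 := by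
  have hdisj : Disjoint {i | ∃ d, IsSlide x y d i} {i | ∃ d, IsSlide y x d i} :=
    Set.disjoint_left.2 fun _ ⟨_, h⟩ ⟨_, h'⟩ => (h.ne_of_swap hxy hc h').2 rfl
  rw [BI_inter_BI_eq hxy, Set.ncard_union_eq hdisj
    ((BI_finite x).subset fun _ ⟨_, h⟩ => h.mem_BI.1)
    ((BI_finite y).subset fun _ ⟨_, h⟩ => h.mem_BI.1),
    ncard_setOf_isSlide_ins hxy, ncard_setOf_isSlide_ins hxy.symm]

theorem ncard_BDI_inter_BDI (hl : x.length = y.length) :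
    (BDI x ∩ BDI y).ncard = (BD x ∩ BD y).ncard + (BI x ∩ BI y).ncard := by
  have hsplit : BDI x ∩ BDI y = (BD x ∩ BD y) ∪ (BI x ∩ BI y) := by
    ext z
    constructor
    · rintro ⟨hx | hx, hy | hy⟩
      · exact .inl ⟨hx, hy⟩
      · have := length_of_mem_BD hx; have := length_of_mem_BI hy; omega
      · have := length_of_mem_BI hx; have := length_of_mem_BD hy; omega
      · exact .inr ⟨hx, hy⟩
    · rintro (⟨hx, hy⟩ | ⟨hx, hy⟩)
      · exact ⟨.inl hx, .inl hy⟩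
      · exact ⟨.inr hx, .inr hy⟩
  have hdisj : Disjoint (BD x ∩ BD y) (BI x ∩ BI y) := Set.disjoint_left.2 fun _ hD hI => by
    have := length_of_mem_BD hD.1; have := length_of_mem_BI hI.1; omega
  rw [hsplit, Set.ncard_union_eq hdisj ((BD_finite x).inter_of_left _)
    ((BI_finite x).inter_of_left _)]

end Intersections

def alternating : Bool → ℕ → List Bool
  | _, 0 => []
  | a, k + 1 => a :: alternating (!a) k

theorem alternating_two_mul (a : Bool) (m : ℕ) :
    alternating a (2 * m) = (List.replicate m [a, !a]).flatten := by
  induction m with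
  | zero => rfl
  | succ m ih => simp [Nat.mul_succ, alternating, ih, List.replicate_succ]

theorem count_alternating_two_mul (a : Bool) (m : ℕ) :
    (alternating a (2 * m)).count true = m := by
  induction m with
  | zero => rfl
  | succ m ih =>
    rw [Nat.mul_succ, alternating, alternating, Bool.not_not, List.count_cons, List.count_cons, ih]
    cases a <;> simp

theorem alternating_succ (a : Bool) (k : ℕ) :
    ∃ b, alternating a (k + 1) = alternating a k ++ [b] := by
  induction k generalizing a with
  | zero => exact ⟨a, rfl⟩
  | succ k ih =>
    obtain ⟨b, hb⟩ := ih (!a)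
    exact ⟨b, by rw [alternating, hb, alternating, List.cons_append]⟩

theorem eq_alternating_of_append_eq_cons {p q : List Bool} {a e e' : Bool}
    (hp : p ++ [e] = a :: q) (hq : q ++ [e'] = (!a) :: p) :
    p ++ [e] = alternating a (p.length + 1) := by
  induction p generalizing q a with
  | nil =>
    obtain ⟨rfl, -⟩ := List.cons.inj hp
    rfl
  | cons f p ih =>
    rw [List.cons_append, List.cons.injEq] at hp
    obtain ⟨rfl, rfl⟩ := hp
    obtain ⟨g, q, hq'⟩ := List.exists_cons_of_ne_nil (List.concat_ne_nil e p)
    rw [hq', List.cons_append, List.cons.injEq] at hq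
    obtain ⟨rfl, hq⟩ := hq
    rw [List.cons_append, ih hq' (by rwa [Bool.not_not]), List.length_cons]
    rfl

theorem hasSlide_alternating (u v : List Bool) (a : Bool) (k : ℕ) :
    HasSlide (u ++ alternating a (k + 1) ++ v) (u ++ alternating (!a) (k + 1) ++ v) := by
  obtain ⟨b, hb⟩ := alternating_succ a k
  exact ⟨_, _, u, alternating a k, v, b, !a, by simp [hb], by simp [alternating], rfl, rfl⟩

theorem typeA_alternating {a : Bool} {n : ℕ} (hn : 1 ≤ n)
    (hc : (alternating a n).count true = (alternating (!a) n).count true) :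
    TypeA (alternating a n) (alternating (!a) n) := by
  obtain ⟨m, rfl | rfl⟩ := Nat.even_or_odd' n
  · refine ⟨m, by omega, [], [], ?_⟩
    cases a
    · exact .inr ⟨by simp [alternating_two_mul, pat01], by simp [alternating_two_mul, pat10]⟩
    · exact .inl ⟨by simp [alternating_two_mul, pat10], by simp [alternating_two_mul, pat01]⟩
  · rw [alternating, alternating, List.count_cons, List.count_cons, Bool.not_not,
      count_alternating_two_mul, count_alternating_two_mul] at hc
    cases a <;> simp at hc

namespace TypeA

variable {x y : List Bool}

theorem cons (a : Bool) : TypeA x y → TypeA (a :: x) (a :: y) := by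
  rintro ⟨m, hm, u, v, ⟨rfl, rfl⟩ | ⟨rfl, rfl⟩⟩
  · exact ⟨m, hm, a :: u, v, .inl ⟨rfl, rfl⟩⟩
  · exact ⟨m, hm, a :: u, v, .inr ⟨rfl, rfl⟩⟩

theorem concat (e : Bool) : TypeA x y → TypeA (x ++ [e]) (y ++ [e]) := by
  rintro ⟨m, hm, u, v, ⟨rfl, rfl⟩ | ⟨rfl, rfl⟩⟩
  · exact ⟨m, hm, u, v ++ [e], .inl ⟨by simp, by simp⟩⟩
  · exact ⟨m, hm, u, v ++ [e], .inr ⟨by simp, by simp⟩⟩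

theorem hasSlide (h : TypeA x y) : HasSlide x y ∧ HasSlide y x := by
  obtain ⟨m, hm, u, v, ⟨rfl, rfl⟩ | ⟨rfl, rfl⟩⟩ := h
  all_goals
    obtain ⟨k, hk⟩ : ∃ k, 2 * m = k + 1 := ⟨2 * m - 1, by omega⟩
    have h10 : pat10 m = alternating true (k + 1) := by
      rw [← hk, alternating_two_mul]; rfl
    have h01 : pat01 m = alternating false (k + 1) := by
      rw [← hk, alternating_two_mul]; rfl
    rw [h10, h01]
    exact ⟨hasSlide_alternating u v _ k, hasSlide_alternating u v _ k⟩

end TypeA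

theorem typeA_of_hasSlide {x y : List Bool} (hxy : x ≠ y) (hc : x.count true = y.count true)
    (h : HasSlide x y) (h' : HasSlide y x) : TypeA x y := by
  induction hn : x.length using Nat.strong_induction_on generalizing x y with
  | _ n ih =>
  obtain ⟨d, i, h⟩ := h
  obtain ⟨d', i', h'⟩ := h'
  obtain ⟨⟨a, x', rfl⟩, c, y', rfl⟩ := h.exists_cons
  by_cases hac : a = c
  · subst hac
    have hxy' : x' ≠ y' := fun he => hxy (congrArg _ he)
    obtain ⟨_, _, h₁, -⟩ := h.of_cons hxy'
    obtain ⟨_, _, h₂, -⟩ := h'.of_cons hxy'.symm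
    exact (ih x'.length (by simp [← hn]) hxy' (by simpa [List.count_cons] using hc)
      ⟨_, _, h₁⟩ ⟨_, _, h₂⟩ rfl).cons a
  obtain ⟨rfl, -⟩ := h.of_head_ne hac
  obtain ⟨rfl, -⟩ := h'.of_head_ne (Ne.symm hac)
  obtain ⟨x₀, e, hx⟩ := (List.eq_nil_or_concat' (a :: d')).resolve_left (List.cons_ne_nil _ _)
  obtain ⟨y₀, e', hy⟩ := (List.eq_nil_or_concat' (c :: d)).resolve_left (List.cons_ne_nil _ _)
  rw [hx, hy] at h h' hxy hc ⊢
  by_cases hee : e = e'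
  · subst hee
    have hxy₀ : x₀ ≠ y₀ := fun he => hxy (by rw [he])
    have hlen : x₀.length < n := by
      rw [← hn, hx, List.length_append, List.length_singleton]
      omega
    exact (ih x₀.length hlen hxy₀ (by simpa using hc) (h.of_concat hxy₀)
      (h'.of_concat hxy₀.symm) rfl).concat e
  obtain rfl := h.eq_of_getLast_ne hee
  obtain rfl := h'.eq_of_getLast_ne (Ne.symm hee)
  obtain rfl := Bool.eq_not_of_ne (Ne.symm hac)
  -- now `x = d ++ [e] = a :: d'` and `y = d' ++ [e'] = !a :: d`, so both alternate
  have hx' : d ++ [e] = alternating a (d.length + 1) :=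
    eq_alternating_of_append_eq_cons hx.symm hy.symm
  have hy' : d' ++ [e'] = alternating (!a) (d'.length + 1) :=
    eq_alternating_of_append_eq_cons hy.symm (by rw [Bool.not_not]; exact hx.symm)
  have hlen : d'.length = d.length := by simpa using congrArg List.length hx
  rw [hx', hy', hlen] at hc ⊢
  exact typeA_alternating (by omega) hc

theorem typeA_iff_hasSlide {x y : List Bool} (hxy : x ≠ y) (hc : x.count true = y.count true) :
    TypeA x y ↔ HasSlide x y ∧ HasSlide y x :=
  ⟨TypeA.hasSlide, fun h => typeA_of_hasSlide hxy hc h.1 h.2⟩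

theorem ncard_BDI_inter_BDI_mem_and_iff {x y : List Bool} (hxy : x ≠ y)
    (hl : x.length = y.length) (hc : x.count true = y.count true) :
    (BDI x ∩ BDI y).ncard ∈ ({0, 2, 4} : Set ℕ) ∧
      ((BDI x ∩ BDI y).ncard = 4 ↔ TypeA x y) := by
  rw [ncard_BDI_inter_BDI hl, ncard_BD_inter_BD hxy hc, ncard_BI_inter_BI hxy hc,
    typeA_iff_hasSlide hxy hc]
  by_cases hxy' : HasSlide x y <;> by_cases hyx : HasSlide y x <;> simp [hxy', hyx]

theorem ncard_setOf_length_count (n k : ℕ) :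
    {x : List Bool | x.length = n ∧ x.count true = k}.ncard = n.choose k := by
  induction n generalizing k with
  | zero =>
    cases k
    · exact Set.ncard_eq_one.2 ⟨[], by ext (_ | _) <;> simp⟩
    · convert Set.ncard_empty (List Bool)
      · ext (_ | _) <;> simp
      · simp
  | succ n ih =>
    have hfin : ∀ p : List Bool → Prop, {x | x.length = n ∧ p x}.Finite :=
      fun _ => (List.finite_length_eq Bool n).subset fun _ hx => hx.1
    have hsplit : {x : List Bool | x.length = n + 1 ∧ x.count true = k} =
        List.cons false '' {x | x.length = n ∧ x.count true = k} ∪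
        List.cons true '' {x | x.length = n ∧ x.count true + 1 = k} := by
      ext (_ | ⟨b, x⟩)
      · simp
      · cases b <;> simp
    have hdisj : Disjoint (List.cons false '' {x : List Bool | x.length = n ∧ x.count true = k})
        (List.cons true '' {x | x.length = n ∧ x.count true + 1 = k}) := by
      refine Set.disjoint_left.2 ?_
      rintro _ ⟨_, -, rfl⟩ ⟨_, -, h⟩
      simp at h
    rw [hsplit, Set.ncard_union_eq hdisj ((hfin _).image _) ((hfin _).image _),
      Set.ncard_image_of_injective _ List.cons_injective,
      Set.ncard_image_of_injective _ List.cons_injective, ih]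
    cases k with
    | zero => simp
    | succ k => simp [ih, Nat.choose_succ_succ', add_comm]

theorem rho_eq_of_reconCode_balanced {n N : ℕ} {B : List Bool → Set (List Bool)}
    (h : reconCode n N B (balanced n)) :
    rho n N B = (n : ℝ) - Real.logb 2 ((n.choose (n / 2) : ℕ) : ℝ) := by
  have hcard : (balanced n).ncard = n.choose (n / 2) := ncard_setOf_length_count n (n / 2)
  have hfin : (balanced n).Finite := (List.finite_length_eq Bool n).subset fun _ hx => hx.1
  have hpos : (1 : ℝ) ≤ n.choose (n / 2) := by
    exact_mod_cast Nat.choose_pos (Nat.div_le_self n 2)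
  refine IsLeast.csInf_eq ⟨⟨balanced n, h, by rw [hcard]⟩, ?_⟩
  rintro _ ⟨C, hC, rfl⟩
  have hle : (C.ncard : ℝ) ≤ n.choose (n / 2) := by
    exact_mod_cast hcard ▸ Set.ncard_le_ncard hC.1 hfin
  rcases (Nat.cast_nonneg C.ncard : (0 : ℝ) ≤ _).eq_or_lt with h0 | h0
  · rw [← h0, Real.logb_zero]
    linarith [Real.logb_nonneg one_lt_two hpos]
  · linarith [Real.logb_le_logb_of_le one_lt_two h0 hle]

theorem stmt14_general (n : ℕ) :
    (∀ x ∈ balanced n, ∀ y ∈ balanced n, x ≠ y →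
      (BDI x ∩ BDI y).ncard ∈ ({0, 2, 4} : Set ℕ) ∧
      ((BDI x ∩ BDI y).ncard = 4 ↔ TypeA x y)) ∧
    (∀ N : ℕ, 5 ≤ N → rho n N BDI = ((n : ℝ) - Real.logb 2 ((n.choose (n / 2) : ℕ) : ℝ))) := by
  have hBDI : ∀ x ∈ balanced n, ∀ y ∈ balanced n, x ≠ y →
      (BDI x ∩ BDI y).ncard ∈ ({0, 2, 4} : Set ℕ) ∧
      ((BDI x ∩ BDI y).ncard = 4 ↔ TypeA x y) := fun x hx y hy hxy =>
    ncard_BDI_inter_BDI_mem_and_iff hxy (hx.1.trans hy.1.symm) (hx.2.trans hy.2.symm)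
  refine ⟨hBDI, fun N hN =>
    rho_eq_of_reconCode_balanced ⟨subset_rfl, fun x hx y hy hxy => ?_⟩⟩
  have hmem := (hBDI x hx y hy hxy).1
  simp only [Set.mem_insert_iff, Set.mem_singleton_iff] at hmem
  omega

/-- Corollary: intersection sizes for `B^DI`, and `ρ_b(n,N;B^DI) = Δ` for `N ≥ 5`. -/
theorem stmt14 (n : ℕ) (hn : Even n) (h2 : 2 ≤ n) :
    (∀ x ∈ balanced n, ∀ y ∈ balanced n, x ≠ y →
      (BDI x ∩ BDI y).ncard ∈ ({0, 2, 4} : Set ℕ) ∧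
      ((BDI x ∩ BDI y).ncard = 4 ↔ TypeA x y)) ∧
    (∀ N : ℕ, 5 ≤ N → rho n N BDI = ((n : ℝ) - Real.logb 2 ((n.choose (n / 2) : ℕ) : ℝ))) :=
  stmt14_general n

end BRC
end
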